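/- arXiv:1003.1999 — 7 statements merged into one kernel-verified Lean document; each statement's English description precedes it below -/
import Mathlib

section
/- For all non-negative integers n and m, the super Catalan number A_{n,m} = (2n)!·(2m)! / (n!·(n+m)!·m!) is an integer. -/
open Nat Finset

lemma floor_ineq (q a b : ℕ) : a / q + (a + b) / q + b / q ≤ 2 * a / q + 2 * b / q := by
  rcases Nat.eq_zero_or_pos q with h | h
  · simp [h]
  have h1 : (a + b) / q = a / q + b / q + if q ≤ a % q + b % q then 1 else 0 :=
    Nat.add_div h
  have h2 : 2 * a / q = a / q + a / q + if q ≤ a % q + a % q then 1 else 0 := by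
    rw [two_mul, Nat.add_div h]
  have h3 : 2 * b / q = b / q + b / q + if q ≤ b % q + b % q then 1 else 0 := by
    rw [two_mul, Nat.add_div h]
  rw [h1, h2, h3]
  split_ifs <;> omega

theorem super_catalan_integral (n m : ℕ) :
    Nat.factorial n * Nat.factorial (n + m) * Nat.factorial m ∣
      Nat.factorial (2 * n) * Nat.factorial (2 * m) := by
  rw [← Nat.factorization_le_iff_dvd
    (by positivity) (by positivity)]
  intro p
  by_cases hp : p.Prime
  · haveI : Fact p.Prime := ⟨hp⟩
    set b := Nat.log p (2 * (n + m)) + 1 with hb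
    have hlog : ∀ k : ℕ, k ≤ 2 * (n + m) → Nat.log p k < b := fun k hk =>
      lt_of_le_of_lt (Nat.log_mono_right hk) (Nat.lt_succ_self _)
    have fact_eq : ∀ k : ℕ, k ≤ 2 * (n + m) →
        (Nat.factorial k).factorization p = ∑ i ∈ Finset.Ico 1 b, k / p ^ i := by
      intro k hk
      rw [Nat.factorization_def _ hp]
      exact padicValNat_factorial (hlog k hk)
    rw [Nat.factorization_mul (by positivity) (by positivity),
        Nat.factorization_mul (by positivity) (by positivity),
        Nat.factorization_mul (by positivity) (by positivity)]
    simp only [Finsupp.coe_add, Pi.add_apply]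
    rw [fact_eq n (by omega), fact_eq (n + m) (by omega), fact_eq m (by omega),
        fact_eq (2 * n) (by omega), fact_eq (2 * m) (by omega),
        ← Finset.sum_add_distrib, ← Finset.sum_add_distrib, ← Finset.sum_add_distrib]
    exact Finset.sum_le_sum fun i _ => floor_ineq (p ^ i) n m
  · simp [Nat.factorization_eq_zero_of_not_prime _ hp]
end

section
/- For all integers n ≥ m ≥ 0, the quantity B_{n,m} = (2n)!·m! / (n!·(2m)!·(n-m)!) is an integer. -/
/-!
`B_{n,m}` satisfies `B_{n+1,m+1} = 4 B_{n,m+1} + B_{n,m}` (with `B_{n,m} = 0` for `m > n`) and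
`B_{n,0} = centralBinom n`: the ratios of `B_{n+1,m+1}` to `B_{n,m+1}` and to `B_{n,m}` are
`2(2n+1)/(n-m)` and `(2n+1)/(2m+1)`, and `4(n-m) + 2(2m+1) = 2(2n+1)`. Hence the natural numbers
`bCoeff n m` defined by this recurrence equal `B_{n,m}`.
-/

open Nat

def bCoeff : ℕ → ℕ → ℕ
  | n, 0 => centralBinom n
  | 0, _ + 1 => 0
  | n + 1, m + 1 => 4 * bCoeff n (m + 1) + bCoeff n m

theorem bCoeff_eq_zero_of_lt {n m : ℕ} (h : n < m) : bCoeff n m = 0 := by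
  induction n generalizing m with
  | zero => obtain ⟨m, rfl⟩ := exists_eq_succ_of_ne_zero h.ne'; rfl
  | succ n ih =>
    obtain ⟨m, rfl⟩ := exists_eq_succ_of_ne_zero (by omega : m ≠ 0)
    simp [bCoeff, ih (by omega : n < m + 1), ih (by omega : n < m)]

theorem centralBinom_mul_factorial_mul_factorial (n : ℕ) :
    centralBinom n * n ! * n ! = (2 * n)! := by
  rw [centralBinom_eq_two_mul_choose]
  simpa [two_mul] using choose_mul_factorial_mul_factorial (le_add_right n n)

theorem factorial_two_mul_succ (n : ℕ) :
    (2 * (n + 1))! = (2 * n + 2) * (2 * n + 1) * (2 * n)! := by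
  rw [show 2 * (n + 1) = 2 * n + 1 + 1 by ring, factorial_succ, factorial_succ, mul_assoc]

theorem bCoeff_mul_factorials {n m : ℕ} (h : m ≤ n) :
    bCoeff n m * (n ! * (2 * m)! * (n - m)!) = (2 * n)! * m ! := by
  induction n generalizing m with
  | zero =>
    obtain rfl : m = 0 := by omega
    simp [bCoeff]
  | succ n ih =>
    cases m with
    | zero =>
      simpa [bCoeff, mul_assoc] using centralBinom_mul_factorial_mul_factorial (n + 1)
    | succ m =>
      obtain ⟨k, rfl⟩ := exists_add_of_le (by omega : m ≤ n)
      have hm : bCoeff (m + k) m * ((m + k)! * (2 * m)! * k !) = (2 * (m + k))! * m ! := by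
        simpa using ih (m := m) (by omega)
      have hm_succ : bCoeff (m + k) (m + 1) * ((m + k)! * (2 * (m + 1))! * k !) =
          k * ((2 * (m + k))! * (m + 1)!) := by
        cases k with
        | zero => simp [bCoeff_eq_zero_of_lt]
        | succ j =>
          have hj := ih (m := m + 1) (by omega)
          rw [show m + (j + 1) - (m + 1) = j by omega] at hj
          rw [factorial_succ j, ← hj]
          ring
      rw [show m + k + 1 - (m + 1) = k by omega, bCoeff]
      simp only [factorial_two_mul_succ, factorial_succ] at hm_succ ⊢
      linear_combination (4 * (m + k + 1)) * hm_succ +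
        (m + k + 1) * (2 * m + 2) * (2 * m + 1) * hm

theorem B_integral (n m : ℕ) (h : m ≤ n) :
    Nat.factorial n * Nat.factorial (2 * m) * Nat.factorial (n - m) ∣
      Nat.factorial (2 * n) * Nat.factorial m :=
  Dvd.intro_left _ (bCoeff_mul_factorials h)
end

section
/- For all non-negative integers n and m, A_{n,m} = Σ_{k=-∞}^{∞} (-1)^k · C(2n, n+k) · C(2m, m+k), where the sum ranges over all integers k with |k| ≤ min(n,m) (von Szily's identity). -/
/-!
Both sides satisfy `F (n + 1) m + F n (m + 1) = 4 * F n m` and equal `C(2m, m)` at `n = 0`.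
For the factorial side this is a one-line computation. For the sum, Pascal's rule applied twice
gives `C(2n+2, n+1+k) = C(2n, n+k-1) + 2 C(2n, n+k) + C(2n, n+k+1)`; the alternating sign makes
the shifted cross terms telescope over `k ∈ ℤ`, leaving four times the original sum.
-/

open Finset Function

def intChoose (N : ℕ) (j : ℤ) : ℕ := if 0 ≤ j then N.choose j.toNat else 0

namespace intChoose

variable {N : ℕ} {j : ℤ}

theorem of_nonneg (h : 0 ≤ j) : intChoose N j = N.choose j.toNat := if_pos h

theorem of_neg (h : j < 0) : intChoose N j = 0 := if_neg h.not_ge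

theorem of_lt (h : (N : ℤ) < j) : intChoose N j = 0 := by
  rw [of_nonneg (by omega), Nat.choose_eq_zero_of_lt (by omega)]

theorem natCast (N k : ℕ) : intChoose N k = N.choose k := of_nonneg k.cast_nonneg

theorem succ (N : ℕ) (j : ℤ) : intChoose (N + 1) j = intChoose N (j - 1) + intChoose N j := by
  rcases lt_trichotomy j 0 with h | rfl | h
  · rw [of_neg h, of_neg (by omega), of_neg h]
  · simp [intChoose]
  · obtain ⟨t, rfl⟩ : ∃ t : ℕ, j = t + 1 := ⟨j.toNat - 1, by omega⟩
    rw [add_sub_cancel_right, ← Nat.cast_succ, natCast, natCast, natCast, Nat.choose_succ_succ']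

end intChoose

def centeredChoose (n : ℕ) (k : ℤ) : ℕ := intChoose (2 * n) (n + k)

theorem centeredChoose_succ (n : ℕ) (k : ℤ) :
    centeredChoose (n + 1) k =
      centeredChoose n (k - 1) + 2 * centeredChoose n k + centeredChoose n (k + 1) := by
  have h₁ : ((n + 1 : ℕ) : ℤ) + k = n + (k + 1) := by push_cast; ring
  have h₂ : (n : ℤ) + (k + 1) - 1 = n + k := by ring
  simp only [centeredChoose, Nat.mul_succ, intChoose.succ, h₁, ← add_sub_assoc]
  rw [h₂]
  ring

theorem centeredChoose_of_lt_natAbs {n : ℕ} {k : ℤ} (h : n < k.natAbs) :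
    centeredChoose n k = 0 := by
  rcases Int.natAbs_eq k with hk | hk
  · exact intChoose.of_lt (by omega)
  · exact intChoose.of_neg (by omega)

theorem hasFiniteSupport_centeredChoose (K : Type*) [Semiring K] (n : ℕ) :
    HasFiniteSupport fun k ↦ (centeredChoose n k : K) := by
  refine (Set.finite_Icc (-(n : ℤ)) n).subset fun k hk ↦ ?_
  by_contra h
  rw [Set.mem_Icc] at h
  exact mem_support.1 hk (by rw [centeredChoose_of_lt_natAbs (by omega), Nat.cast_zero])

theorem finsum_sub_succ_eq_zero {M : Type*} [AddCommGroup M] {e : ℤ → M}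
    (he : e.HasFiniteSupport) :
    ∑ᶠ k, (e k - e (k + 1)) = 0 := by
  rw [finsum_sub_distrib he (he.fun_comp_of_injective (add_left_injective 1)),
    show ∑ᶠ k, e (k + 1) = ∑ᶠ k, e k from finsum_comp_equiv (Equiv.addRight 1), sub_self]

theorem finsum_alternating_smooth_left_add_smooth_right {K : Type*} [Field K] (f g : ℤ → K)
    (hf : f.HasFiniteSupport) :
    ∑ᶠ k, (-1 : K) ^ k * ((f (k - 1) + 2 * f k + f (k + 1)) * g k) +
        ∑ᶠ k, (-1 : K) ^ k * (f k * (g (k - 1) + 2 * g k + g (k + 1))) =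
      4 * ∑ᶠ k, (-1 : K) ^ k * (f k * g k) := by
  -- The sign `(-1) ^ k` turns the shifted cross terms into the differences `e k - e (k + 1)`.
  set e : ℤ → K := fun k ↦ (-1) ^ k * (f (k - 1) * g k + f k * g (k - 1))
  have : Injective fun k : ℤ ↦ k - 1 := sub_left_injective
  have : Injective fun k : ℤ ↦ k + 1 := add_left_injective 1
  have he : e.HasFiniteSupport := by simp only [e]; fun_prop
  have key : ∀ k, (-1 : K) ^ k * ((f (k - 1) + 2 * f k + f (k + 1)) * g k) +
      (-1 : K) ^ k * (f k * (g (k - 1) + 2 * g k + g (k + 1))) =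
      4 * ((-1 : K) ^ k * (f k * g k)) + (e k - e (k + 1)) := by
    intro k
    simp only [e, zpow_add_one₀ (by norm_num : (-1 : K) ≠ 0), add_sub_cancel_right]
    ring
  rw [← finsum_add_distrib, finsum_congr key, finsum_add_distrib, finsum_sub_succ_eq_zero he,
    add_zero, mul_finsum]
  all_goals fun_prop

def superCatalan (n m : ℕ) : ℚ :=
  (Nat.factorial (2 * n) * Nat.factorial (2 * m) : ℚ) /
    (Nat.factorial n * Nat.factorial (n + m) * Nat.factorial m)

theorem superCatalan_zero_left (m : ℕ) : superCatalan 0 m = (2 * m).choose m := by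
  rw [superCatalan, Nat.cast_choose ℚ (by omega), show 2 * m - m = m by omega]
  simp

theorem superCatalan_succ_left_add_succ_right (n m : ℕ) :
    superCatalan (n + 1) m + superCatalan n (m + 1) = 4 * superCatalan n m := by
  simp only [superCatalan, show 2 * (n + 1) = 2 * n + 1 + 1 by ring,
    show 2 * (m + 1) = 2 * m + 1 + 1 by ring, show n + 1 + m = n + m + 1 by ring,
    ← add_assoc, Nat.factorial_succ]
  push_cast
  field_simp
  ring

noncomputable def vonSzilySum (n m : ℕ) : ℚ :=
  ∑ᶠ k : ℤ, (-1 : ℚ) ^ k * (centeredChoose n k * centeredChoose m k)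

theorem vonSzilySum_zero_left (m : ℕ) : vonSzilySum 0 m = (2 * m).choose m := by
  rw [vonSzilySum, finsum_eq_single _ 0 fun k hk ↦ ?_]
  · simp [centeredChoose, intChoose]
  · rw [centeredChoose_of_lt_natAbs (by omega)]; simp

theorem vonSzilySum_succ_left_add_succ_right (n m : ℕ) :
    vonSzilySum (n + 1) m + vonSzilySum n (m + 1) = 4 * vonSzilySum n m := by
  simp only [vonSzilySum, centeredChoose_succ, Nat.cast_add, Nat.cast_mul, Nat.cast_ofNat]
  exact finsum_alternating_smooth_left_add_smooth_right _ _ (hasFiniteSupport_centeredChoose ℚ n)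

theorem superCatalan_eq_vonSzilySum (n m : ℕ) : superCatalan n m = vonSzilySum n m := by
  induction n generalizing m with
  | zero => rw [superCatalan_zero_left, vonSzilySum_zero_left]
  | succ n ih =>
    linear_combination superCatalan_succ_left_add_succ_right n m -
      vonSzilySum_succ_left_add_succ_right n m + 4 * ih m - ih (m + 1)

theorem vonSzilySum_eq_sum_Icc (n m : ℕ) :
    vonSzilySum n m = ∑ k ∈ Finset.Icc (-(min n m : ℤ)) (min n m),
        (-1 : ℚ) ^ k * (Nat.choose (2 * n) ((n : ℤ) + k).toNat : ℚ) *
          (Nat.choose (2 * m) ((m : ℤ) + k).toNat : ℚ) := by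
  rw [vonSzilySum, finsum_eq_sum_of_support_subset _ fun k hk ↦ ?_]
  · refine sum_congr rfl fun k hk ↦ ?_
    rw [mem_Icc] at hk
    rw [centeredChoose, centeredChoose, intChoose.of_nonneg (by omega),
      intChoose.of_nonneg (by omega), mul_assoc]
  · rw [coe_Icc, Set.mem_Icc]
    by_contra h
    refine mem_support.1 hk ?_
    rcases le_total n m with hnm | hnm
    · rw [centeredChoose_of_lt_natAbs (n := n) (by omega)]; simp
    · rw [centeredChoose_of_lt_natAbs (n := m) (by omega)]; simp

theorem von_szily (n m : ℕ) :
    ((Nat.factorial (2 * n) * Nat.factorial (2 * m) : ℚ) /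
        (Nat.factorial n * Nat.factorial (n + m) * Nat.factorial m)) =
      ∑ k ∈ Finset.Icc (-(min n m : ℤ)) (min n m),
        (-1 : ℚ) ^ k * (Nat.choose (2 * n) ((n : ℤ) + k).toNat : ℚ) *
          (Nat.choose (2 * m) ((m : ℤ) + k).toNat : ℚ) :=
  (superCatalan_eq_vonSzilySum n m).trans (vonSzilySum_eq_sum_Icc n m)
end

section
/- Let a_1,…,a_r and b_1,…,b_s be positive integers such that Σ_i ⌊a_i x⌋ - Σ_j ⌊b_j x⌋ ≥ 0 for all real x ≥ 0. Then for every positive integer n, the ratio D_n = (a_1 n)! ⋯ (a_r n)! / ((b_1 n)! ⋯ (b_s n)!) is an integer. -/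
lemma landau_aux_floor (m n c : ℕ) :
    ⌊(m : ℝ) * ((n : ℝ) / (c : ℝ))⌋ = ((m * n / c : ℕ) : ℤ) := by
  have h0 : (0:ℝ) ≤ (m:ℝ) * ((n:ℝ)/(c:ℝ)) := by positivity
  rw [← Int.natCast_floor_eq_floor h0, mul_div_assoc', ← Nat.cast_mul,
    Nat.floor_div_eq_div]

theorem landau_sufficiency (r s : ℕ) (a : Fin r → ℕ) (b : Fin s → ℕ)
    (ha : ∀ i, 0 < a i) (hb : ∀ j, 0 < b j)
    (h : ∀ x : ℝ, 0 ≤ x → ∑ j, ⌊(b j : ℝ) * x⌋ ≤ ∑ i, ⌊(a i : ℝ) * x⌋) :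
    ∀ n : ℕ, 0 < n →
      (∏ j, Nat.factorial (b j * n)) ∣ ∏ i, Nat.factorial (a i * n) := by
  intro n hn
  -- sum bound : ∑ b ≤ ∑ a
  have hsum : (∑ j, b j) ≤ ∑ i, a i := by
    have h1 := h 1 zero_le_one
    simp only [mul_one, Int.floor_natCast] at h1
    exact_mod_cast h1
  have hA0 : (∏ i, Nat.factorial (a i * n)) ≠ 0 :=
    Finset.prod_ne_zero_iff.mpr fun i _ => Nat.factorial_ne_zero _
  have hB0 : (∏ j, Nat.factorial (b j * n)) ≠ 0 :=
    Finset.prod_ne_zero_iff.mpr fun j _ => Nat.factorial_ne_zero _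
  rw [← Nat.factorization_le_iff_dvd hB0 hA0, Finsupp.le_def]
  intro p
  by_cases hp : p.Prime
  · set N := (∑ i, a i) * n with hN
    set B := Nat.log p N + 1 with hBdef
    have key : ∀ m : ℕ, m ≤ N →
        (Nat.factorial m).factorization p = ∑ k ∈ Finset.Ico 1 B, m / p ^ k := by
      intro m hm
      haveI := Fact.mk hp
      rw [Nat.factorization_def _ hp]
      exact padicValNat_factorial
        (lt_of_le_of_lt (Nat.log_mono_right hm) (Nat.lt_succ_self _))
    have hai : ∀ i, a i * n ≤ N :=
      fun i => Nat.mul_le_mul_right n (Finset.single_le_sum (fun _ _ => Nat.zero_le _)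
        (Finset.mem_univ i))
    have hbj : ∀ j, b j * n ≤ N := fun j =>
      Nat.mul_le_mul_right n
        (le_trans (Finset.single_le_sum (fun _ _ => Nat.zero_le _) (Finset.mem_univ j)) hsum)
    rw [Nat.factorization_prod (fun i _ => Nat.factorial_ne_zero _),
      Nat.factorization_prod (fun j _ => Nat.factorial_ne_zero _)]
    simp only [Finsupp.coe_finset_sum, Finset.sum_apply]
    calc ∑ j, (Nat.factorial (b j * n)).factorization p
        = ∑ j, ∑ k ∈ Finset.Ico 1 B, (b j * n) / p ^ k := by
          exact Finset.sum_congr rfl fun j _ => key _ (hbj j)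
      _ = ∑ k ∈ Finset.Ico 1 B, ∑ j, (b j * n) / p ^ k := Finset.sum_comm
      _ ≤ ∑ k ∈ Finset.Ico 1 B, ∑ i, (a i * n) / p ^ k := by
          apply Finset.sum_le_sum
          intro k _
          have hx : (0 : ℝ) ≤ (n : ℝ) / ((p ^ k : ℕ) : ℝ) := by positivity
          have h2 := h _ hx
          simp only [landau_aux_floor] at h2
          exact_mod_cast h2
      _ = ∑ i, ∑ k ∈ Finset.Ico 1 B, (a i * n) / p ^ k := Finset.sum_comm
      _ = ∑ i, (Nat.factorial (a i * n)).factorization p :=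
          (Finset.sum_congr rfl fun i _ => (key _ (hai i)).symm)
  · rw [Nat.factorization_eq_zero_of_not_prime _ hp]
    exact Nat.zero_le _
end

section
/- Let a_1,…,a_r and b_1,…,b_s be positive integers such that (a_1 n)!⋯(a_r n)!/((b_1 n)!⋯(b_s n)!) is an integer for all positive integers n. Then Σ_i ⌊a_i x⌋ - Σ_j ⌊b_j x⌋ ≥ 0 for all real x ≥ 0. -/
open Finset

theorem landau_necessity (r s : ℕ) (a : Fin r → ℕ) (b : Fin s → ℕ)
    (ha : ∀ i, 0 < a i) (hb : ∀ j, 0 < b j)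
    (h : ∀ n : ℕ, 0 < n →
      (∏ j, Nat.factorial (b j * n)) ∣ ∏ i, Nat.factorial (a i * n)) :
    ∀ x : ℝ, 0 ≤ x → ∑ j, ⌊(b j : ℝ) * x⌋ ≤ ∑ i, ⌊(a i : ℝ) * x⌋ := by
  intro x hx
  rcases eq_or_lt_of_le hx with hx0 | hx0
  · simp [← hx0]
  -- x > 0
  set δ : Fin r → ℝ := fun i => ((⌊(a i : ℝ) * x⌋ : ℝ) + 1) - (a i : ℝ) * x with hδ
  have hδpos : ∀ i, 0 < δ i := fun i => by
    have := Int.lt_floor_add_one ((a i : ℝ) * x)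
    simp only [hδ]; linarith
  set g : Fin r → ℕ := fun i => ⌈((a i : ℝ) * (x + 1)) ⊔ ((a i : ℝ) / δ i)⌉₊ with hg
  set N : ℕ := Finset.univ.sup g with hN
  obtain ⟨p, hpN, hp⟩ := Nat.exists_infinite_primes (N + 1)
  haveI : Fact p.Prime := ⟨hp⟩
  have hp0 : 0 < p := hp.pos
  have hpR : (0 : ℝ) < p := by exact_mod_cast hp0
  have hgi : ∀ i, ((a i : ℝ) * (x + 1)) ⊔ ((a i : ℝ) / δ i) < p := by
    intro i
    have h1 : g i ≤ N := Finset.le_sup (Finset.mem_univ i)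
    have h2 : g i < p := lt_of_le_of_lt h1 (by omega)
    calc ((a i : ℝ) * (x + 1)) ⊔ ((a i : ℝ) / δ i) ≤ (g i : ℝ) := Nat.le_ceil _
      _ < p := by exact_mod_cast h2
  have hax : ∀ i, (a i : ℝ) * (x + 1) < p := fun i =>
    lt_of_le_of_lt le_sup_left (hgi i)
  have hadelta : ∀ i, (a i : ℝ) < p * δ i := by
    intro i
    have := lt_of_le_of_lt le_sup_right (hgi i)
    have := (div_lt_iff₀ (hδpos i)).mp this
    linarith [this]
  set n : ℕ := ⌈(p : ℝ) * x⌉₊ with hn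
  have hnpos : 0 < n := Nat.ceil_pos.mpr (by positivity)
  have hn1 : (n : ℝ) < p * x + 1 := Nat.ceil_lt_add_one (by positivity)
  have hn0 : (p : ℝ) * x ≤ n := Nat.le_ceil _
  -- key real bounds
  have key1 : ∀ i, (a i : ℝ) * n < p * ((⌊(a i : ℝ) * x⌋ : ℝ) + 1) := by
    intro i
    have h1 : (a i : ℝ) * n < (a i) * (p * x + 1) := by
      have : (0 : ℝ) < a i := by exact_mod_cast ha i
      nlinarith
    have h2 := hadelta i
    have h3 : (⌊(a i : ℝ) * x⌋ : ℝ) + 1 = (a i : ℝ) * x + δ i := by simp [hδ]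
    rw [h3]; nlinarith
  have key2 : ∀ i, a i * n < p ^ 2 := by
    intro i
    have h1 : (a i : ℝ) * n < (a i) * (p * x + 1) := by
      have : (0 : ℝ) < a i := by exact_mod_cast ha i
      nlinarith
    have h2 := hax i
    have h3 : (1 : ℝ) ≤ p := by exact_mod_cast hp0
    have : ((a i * n : ℕ) : ℝ) < ((p ^ 2 : ℕ) : ℝ) := by
      push_cast
      have h4 : (a i : ℝ) * (p * x + 1) ≤ p * ((a i : ℝ) * (x + 1)) := by nlinarith
      have h5 : (p : ℝ) * ((a i : ℝ) * (x + 1)) < p * p := by nlinarith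
      nlinarith
    exact_mod_cast this
  -- nat division bounds
  have hA1 : ∀ i, ((a i * n / p : ℕ) : ℤ) ≤ ⌊(a i : ℝ) * x⌋ := by
    intro i
    have hF : (0 : ℤ) ≤ ⌊(a i : ℝ) * x⌋ := Int.floor_nonneg.mpr (by positivity)
    set F : ℕ := (⌊(a i : ℝ) * x⌋).toNat with hFd
    have hFc : (F : ℤ) = ⌊(a i : ℝ) * x⌋ := Int.toNat_of_nonneg hF
    have hlt : a i * n < (F + 1) * p := by
      have : ((a i * n : ℕ) : ℝ) < (((F + 1) * p : ℕ) : ℝ) := by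
        push_cast
        have := key1 i
        have : (a i : ℝ) * n < p * ((F : ℝ) + 1) := by
          have : ((F : ℝ)) = (⌊(a i : ℝ) * x⌋ : ℝ) := by exact_mod_cast hFc
          rw [this]; exact key1 i
        linarith
      exact_mod_cast this
    have : a i * n / p < F + 1 := (Nat.div_lt_iff_lt_mul hp0).mpr hlt
    have : a i * n / p ≤ F := Nat.lt_succ_iff.mp this
    calc ((a i * n / p : ℕ) : ℤ) ≤ (F : ℤ) := by exact_mod_cast this
      _ = _ := hFc
  have hB1 : ∀ j, ⌊(b j : ℝ) * x⌋ ≤ ((b j * n / p : ℕ) : ℤ) := by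
    intro j
    rw [Int.floor_le_iff]
    have hq : b j * n < p * (b j * n / p) + p := by
      have h1 := Nat.div_add_mod (b j * n) p
      have h2 := Nat.mod_lt (b j * n) hp0
      omega
    have hqR : (b j : ℝ) * n < p * ((b j * n / p : ℕ) : ℝ) + p := by
      have : ((b j * n : ℕ) : ℝ) < p * ((b j * n / p : ℕ) : ℝ) + p := by exact_mod_cast hq
      push_cast at this; exact this
    have hbn : (b j : ℝ) * ((p : ℝ) * x) ≤ (b j : ℝ) * n := by
      have : (0 : ℝ) ≤ b j := by positivity
      nlinarith
    have hkey : (p : ℝ) * ((b j : ℝ) * x) < p * (((b j * n / p : ℕ) : ℝ) + 1) := by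
      calc (p : ℝ) * ((b j : ℝ) * x) = (b j : ℝ) * ((p : ℝ) * x) := by ring
        _ ≤ (b j : ℝ) * n := hbn
        _ < p * ((b j * n / p : ℕ) : ℝ) + p := hqR
        _ = p * (((b j * n / p : ℕ) : ℝ) + 1) := by ring
    have := lt_of_mul_lt_mul_left hkey (le_of_lt hpR)
    exact_mod_cast this
  -- Legendre
  set B : ℕ := (∑ i, a i + ∑ j, b j) * n + 2 with hB
  have hBa : ∀ i, Nat.log p (a i * n) < B := by
    intro i
    have h1 : a i ≤ ∑ i, a i := Finset.single_le_sum (f := a) (fun _ _ => Nat.zero_le _)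
      (Finset.mem_univ i)
    have h2 := Nat.log_le_self p (a i * n)
    have : a i * n ≤ (∑ i, a i + ∑ j, b j) * n := Nat.mul_le_mul_right n (by omega)
    omega
  have hBb : ∀ j, Nat.log p (b j * n) < B := by
    intro j
    have h1 : b j ≤ ∑ j, b j := Finset.single_le_sum (f := b) (fun _ _ => Nat.zero_le _)
      (Finset.mem_univ j)
    have h2 := Nat.log_le_self p (b j * n)
    have : b j * n ≤ (∑ i, a i + ∑ j, b j) * n := Nat.mul_le_mul_right n (by omega)
    omega
  have h1B : 1 ∈ Finset.Ico 1 B := by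
    simp only [Finset.mem_Ico]; omega
  have hdvd := h n hnpos
  have hb0 : (∏ j, Nat.factorial (b j * n)) ≠ 0 :=
    Finset.prod_ne_zero_iff.mpr fun _ _ => (Nat.factorial_pos _).ne'
  have ha0 : (∏ i, Nat.factorial (a i * n)) ≠ 0 :=
    Finset.prod_ne_zero_iff.mpr fun _ _ => (Nat.factorial_pos _).ne'
  have hfle := (Nat.factorization_le_iff_dvd hb0 ha0).mpr hdvd
  have hflep : (∏ j, Nat.factorial (b j * n)).factorization p ≤
      (∏ i, Nat.factorial (a i * n)).factorization p := hfle p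
  rw [Nat.factorization_prod (fun _ _ => (Nat.factorial_pos _).ne'),
      Nat.factorization_prod (fun _ _ => (Nat.factorial_pos _).ne'),
      Finset.sum_apply', Finset.sum_apply'] at hflep
  have hrwb : ∀ j : Fin s, (Nat.factorial (b j * n)).factorization p
      = ∑ k ∈ Finset.Ico 1 B, (b j * n) / p ^ k := by
    intro j
    rw [Nat.factorization_def _ hp, padicValNat_factorial (hBb j)]
  have hrwa : ∀ i : Fin r, (Nat.factorial (a i * n)).factorization p
      = ∑ k ∈ Finset.Ico 1 B, (a i * n) / p ^ k := by
    intro i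
    rw [Nat.factorization_def _ hp, padicValNat_factorial (hBa i)]
  rw [Finset.sum_congr rfl (fun j _ => hrwb j),
      Finset.sum_congr rfl (fun i _ => hrwa i)] at hflep
  -- a-side inner sums collapse to single term
  have hacol : ∀ i : Fin r, ∑ k ∈ Finset.Ico 1 B, (a i * n) / p ^ k = a i * n / p := by
    intro i
    rw [Finset.sum_eq_single_of_mem 1 h1B]
    · rw [pow_one]
    · intro k hk hk1
      have hk2 : 2 ≤ k := by
        simp only [Finset.mem_Ico] at hk; omega
      apply Nat.div_eq_of_lt
      calc a i * n < p ^ 2 := key2 i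
        _ ≤ p ^ k := Nat.pow_le_pow_right hp0 hk2
  have hbcol : ∀ j : Fin s, b j * n / p ≤ ∑ k ∈ Finset.Ico 1 B, (b j * n) / p ^ k := by
    intro j
    have := Finset.single_le_sum (f := fun k => (b j * n) / p ^ k)
      (fun _ _ => Nat.zero_le _) h1B
    simpa using this
  have hnat : ∑ j, b j * n / p ≤ ∑ i, a i * n / p := by
    calc ∑ j, b j * n / p ≤ ∑ j, ∑ k ∈ Finset.Ico 1 B, (b j * n) / p ^ k :=
          Finset.sum_le_sum fun j _ => hbcol j
      _ ≤ ∑ i, ∑ k ∈ Finset.Ico 1 B, (a i * n) / p ^ k := hflep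
      _ = ∑ i, a i * n / p := Finset.sum_congr rfl fun i _ => hacol i
  calc ∑ j, ⌊(b j : ℝ) * x⌋ ≤ ∑ j, ((b j * n / p : ℕ) : ℤ) :=
        Finset.sum_le_sum fun j _ => hB1 j
    _ = ((∑ j, b j * n / p : ℕ) : ℤ) := by push_cast; ring
    _ ≤ ((∑ i, a i * n / p : ℕ) : ℤ) := by exact_mod_cast hnat
    _ = ∑ i, ((a i * n / p : ℕ) : ℤ) := by push_cast; ring
    _ ≤ ∑ i, ⌊(a i : ℝ) * x⌋ := Finset.sum_le_sum fun i _ => hA1 i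
end

section
/- Let a_1,…,a_r and b_1,…,b_s be positive integers such that Σ_i ⌊a_i x⌋ - Σ_j ⌊b_j x⌋ ≥ 0 for all real x ≥ 0. Then the rational function [a_1]!_q ⋯ [a_r]!_q / ([b_1]!_q ⋯ [b_s]!_q) is a polynomial with integer coefficients. -/
/-!
Multiplying `[n]!_q` by `(X - 1)^n` gives `∏_{k ≤ n} (X^k - 1) = ∏_{k ≤ n} ∏_{d ∣ k} Φ_d`, and
`Φ_d` occurs there `⌊n / d⌋` times, so `[n]!_q = ∏_{1 < d ≤ n} Φ_d ^ ⌊n / d⌋`. Both sides of the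
claimed divisibility are therefore products of the same cyclotomic polynomials, and the exponent
of `Φ_d` on the left, `∑ ⌊b_j / d⌋`, is at most the one on the right, `∑ ⌊a_i / d⌋`, by the
hypothesis at `x = 1 / d`.
-/

open Polynomial

/-- The `q`-factorial `[n]! = ∏_{i=1}^n (1 + q + ⋯ + q^{i-1})` as a polynomial over `ℤ`. -/
noncomputable def qFactorial (n : ℕ) : Polynomial ℤ :=
  ∏ i ∈ Finset.range n, ∑ j ∈ Finset.range (i + 1), X ^ j

open Finset

theorem qFactorial_succ (n : ℕ) :
    qFactorial (n + 1) = qFactorial n * ∑ j ∈ range (n + 1), X ^ j :=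
  prod_range_succ _ n

theorem X_sub_one_pow_mul_qFactorial (n : ℕ) :
    (X - 1) ^ n * qFactorial n = ∏ k ∈ Ioc 0 n, ((X : ℤ[X]) ^ k - 1) := by
  induction n with
  | zero => simp [qFactorial]
  | succ n ih =>
    rw [qFactorial_succ, prod_Ioc_succ_top n.zero_le, ← ih, ← mul_geom_sum]
    ring

theorem prod_Ioc_X_pow_sub_one_eq_prod_cyclotomic (R : Type*) [CommRing R] (n : ℕ) :
    ∏ k ∈ Ioc 0 n, ((X : R[X]) ^ k - 1) = ∏ d ∈ Ioc 0 n, cyclotomic d R ^ (n / d) := by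
  calc ∏ k ∈ Ioc 0 n, ((X : R[X]) ^ k - 1)
      = ∏ k ∈ Ioc 0 n, ∏ d ∈ k.divisors, cyclotomic d R :=
        prod_congr rfl fun k hk => (prod_cyclotomic_eq_X_pow_sub_one (mem_Ioc.mp hk).1 R).symm
    _ = ∏ d ∈ Ioc 0 n, ∏ _k ∈ {k ∈ Ioc 0 n | d ∣ k}, cyclotomic d R := by
        refine prod_comm' fun k d => ?_
        simp only [mem_Ioc, Nat.mem_divisors, mem_filter]
        constructor
        · rintro ⟨⟨hk0, hkn⟩, hdk, -⟩
          exact ⟨⟨⟨hk0, hkn⟩, hdk⟩, Nat.pos_of_dvd_of_pos hdk hk0,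
            (Nat.le_of_dvd hk0 hdk).trans hkn⟩
        · rintro ⟨⟨⟨hk0, hkn⟩, hdk⟩, -⟩
          exact ⟨⟨hk0, hkn⟩, hdk, hk0.ne'⟩
    _ = ∏ d ∈ Ioc 0 n, cyclotomic d R ^ (n / d) := by
        refine prod_congr rfl fun d _ => ?_
        rw [prod_const, Nat.Ioc_filter_dvd_card_eq_div]

theorem qFactorial_eq_prod_cyclotomic (n : ℕ) :
    qFactorial n = ∏ d ∈ Ioc 1 n, cyclotomic d ℤ ^ (n / d) := by
  rcases n.eq_zero_or_pos with rfl | hn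
  · simp [qFactorial]
  have hX : (X - 1 : ℤ[X]) ^ n ≠ 0 := pow_ne_zero n (X_sub_C_ne_zero 1)
  apply mul_left_cancel₀ hX
  rw [X_sub_one_pow_mul_qFactorial, prod_Ioc_X_pow_sub_one_eq_prod_cyclotomic,
    ← prod_Ioc_consecutive _ zero_le_one hn, show Ioc 0 1 = {1} from rfl, prod_singleton,
    cyclotomic_one, Nat.div_one]

theorem qFactorial_eq_prod_cyclotomic_of_le {n N : ℕ} (hn : n ≤ N) :
    qFactorial n = ∏ d ∈ Ioc 1 N, cyclotomic d ℤ ^ (n / d) := by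
  rw [qFactorial_eq_prod_cyclotomic]
  refine prod_subset (Ioc_subset_Ioc_right hn) fun d hd hnd => ?_
  rw [Nat.div_eq_of_lt, pow_zero]
  simp only [mem_Ioc] at hd hnd
  omega

theorem prod_qFactorial_eq_prod_cyclotomic {ι : Type*} [Fintype ι] (c : ι → ℕ) {N : ℕ}
    (hc : ∀ i, c i ≤ N) :
    ∏ i, qFactorial (c i) = ∏ d ∈ Ioc 1 N, cyclotomic d ℤ ^ (∑ i, c i / d) := by
  simp_rw [qFactorial_eq_prod_cyclotomic_of_le (hc _), ← prod_pow_eq_pow_sum]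
  exact prod_comm

theorem Int.floor_natCast_mul_inv_natCast {K : Type*} [Field K] [LinearOrder K]
    [IsOrderedRing K] [FloorRing K] (m n : ℕ) : ⌊(m : K) * (n : K)⁻¹⌋ = ((m / n : ℕ) : ℤ) := by
  rw [← div_eq_mul_inv, Int.floor_div_natCast, Int.floor_natCast]
  norm_cast

theorem q_landau_general (r s : ℕ) (a : Fin r → ℕ) (b : Fin s → ℕ)
    (h : ∀ x : ℝ, 0 ≤ x → ∑ j, ⌊(b j : ℝ) * x⌋ ≤ ∑ i, ⌊(a i : ℝ) * x⌋) :
    (∏ j, qFactorial (b j)) ∣ ∏ i, qFactorial (a i) := by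
  set N := ∑ i, a i + ∑ j, b j
  have haN (i) : a i ≤ N :=
    (single_le_sum (fun _ _ => Nat.zero_le _) (mem_univ i)).trans le_self_add
  have hbN (j) : b j ≤ N :=
    (single_le_sum (fun _ _ => Nat.zero_le _) (mem_univ j)).trans le_add_self
  rw [prod_qFactorial_eq_prod_cyclotomic a haN, prod_qFactorial_eq_prod_cyclotomic b hbN]
  refine prod_dvd_prod_of_dvd _ _ fun d _ => pow_dvd_pow _ ?_
  have hd := h (d : ℝ)⁻¹ (by positivity)
  simp only [Int.floor_natCast_mul_inv_natCast] at hd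
  exact_mod_cast hd

theorem q_landau (r s : ℕ) (a : Fin r → ℕ) (b : Fin s → ℕ)
    (ha : ∀ i, 0 < a i) (hb : ∀ j, 0 < b j)
    (h : ∀ x : ℝ, 0 ≤ x → ∑ j, ⌊(b j : ℝ) * x⌋ ≤ ∑ i, ⌊(a i : ℝ) * x⌋) :
    (∏ j, qFactorial (b j)) ∣ ∏ i, qFactorial (a i) :=
  q_landau_general r s a b h
end

section
/- For all non-negative integers n and m, the q-super Catalan number A_{n,m}(q) = [2n]!_q [2m]!_q / ([n]!_q [n+m]!_q [m]!_q) is a polynomial in q with non-negative integer coefficients. -/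
/-!
Write `A(n, m) = [2n]! [2m]! / ([n]! [n+m]! [m]!)`. It is symmetric in `n, m`, and `A(0, m)` is
the Gaussian binomial `[2m choose m]`. For `n = m + p`, splitting
`[2n]! = [2n choose p] [p]! [n+m]!` and expanding `[2n choose p]` by the q-Vandermonde identity
twice gives
`A(m + p, m) = ∑_{s, i} q^(s(m+s) + i(m+i)) [p choose 2i] [p-2i choose s-i] A(i, m)`
with `2i ≤ p`, so nonnegativity follows by strong induction on `n + m`.
-/

open Polynomial

open Finset

noncomputable def qInt (n : ℕ) : ℤ[X] := ∑ j ∈ range n, X ^ j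

lemma qInt_add (a b : ℕ) : qInt (a + b) = qInt a + X ^ a * qInt b := by
  simp only [qInt, sum_range_add, mul_sum, pow_add]

lemma qFactorial_succ_s11 (n : ℕ) : qFactorial (n + 1) = qFactorial n * qInt (n + 1) :=
  prod_range_succ _ _

@[simp] lemma qFactorial_zero : qFactorial 0 = 1 := prod_range_zero _

noncomputable def qBinom : ℕ → ℕ → ℤ[X]
  | _, 0 => 1
  | 0, _ + 1 => 0
  | n + 1, k + 1 => qBinom n k + X ^ (k + 1) * qBinom n (k + 1)

@[simp] lemma qBinom_zero_right (n : ℕ) : qBinom n 0 = 1 := by cases n <;> rfl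

lemma qBinom_succ_succ (n k : ℕ) :
    qBinom (n + 1) (k + 1) = qBinom n k + X ^ (k + 1) * qBinom n (k + 1) := rfl

lemma qBinom_eq_zero_of_lt {n k : ℕ} (h : n < k) : qBinom n k = 0 := by
  induction n generalizing k with
  | zero => obtain ⟨k, rfl⟩ := Nat.exists_eq_add_of_lt h; rfl
  | succ n ih =>
    obtain ⟨k, rfl⟩ := Nat.exists_eq_add_of_lt (Nat.zero_lt_of_lt h)
    rw [zero_add, qBinom_succ_succ, ih (by omega), ih (by omega), mul_zero, add_zero]

@[simp] lemma qBinom_self (n : ℕ) : qBinom n n = 1 := by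
  induction n with
  | zero => rfl
  | succ n ih => rw [qBinom_succ_succ, ih, qBinom_eq_zero_of_lt n.lt_succ_self, mul_zero, add_zero]

lemma qFactorial_add (a b : ℕ) :
    qFactorial (a + b) = qBinom (a + b) a * qFactorial a * qFactorial b := by
  induction a generalizing b with
  | zero => simp
  | succ a iha =>
    induction b with
    | zero => simp
    | succ b ihb =>
      have h1 := iha (b + 1)
      rw [← add_assoc] at h1
      rw [show a + 1 + b = a + b + 1 by ring] at ihb
      rw [show a + 1 + (b + 1) = a + b + 1 + 1 by ring, qBinom_succ_succ,
        qFactorial_succ_s11 (a + b + 1), show a + b + 1 + 1 = a + 1 + (b + 1) by ring, qInt_add]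
      linear_combination qInt (a + 1) * h1 + X ^ (a + 1) * qInt (b + 1) * ihb -
        qBinom (a + b + 1) a * qFactorial (b + 1) * qFactorial_succ_s11 a -
        X ^ (a + 1) * qBinom (a + b + 1) (a + 1) * qFactorial (a + 1) * qFactorial_succ_s11 b

lemma qFactorial_eq_qBinom_mul {a b n : ℕ} (h : a + b = n) :
    qFactorial n = qBinom n a * qFactorial a * qFactorial b := h ▸ qFactorial_add a b

theorem qBinom_add_eq_sum (a b c : ℕ) :
    qBinom (a + b) c =
      ∑ i ∈ range (c + 1), X ^ (i * (b + i - c)) * (qBinom a i * qBinom b (c - i)) := by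
  induction b generalizing c with
  | zero =>
    rw [sum_eq_single_of_mem c (self_mem_range_succ c)]
    · simp
    · intro i hi hic
      rw [qBinom_eq_zero_of_lt (by simp only [mem_range] at hi; omega : 0 < c - i), mul_zero, mul_zero]
  | succ b ih =>
    cases c with
    | zero => simp
    | succ c =>
      have hterm : ∀ i ∈ range (c + 1),
          X ^ (i * (b + 1 + i - (c + 1))) * (qBinom a i * qBinom (b + 1) (c + 1 - i)) =
            X ^ (i * (b + i - c)) * (qBinom a i * qBinom b (c - i)) +
              X ^ (c + 1) *
                (X ^ (i * (b + i - (c + 1))) * (qBinom a i * qBinom b (c + 1 - i))) := by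
        intro i hi
        have hi : i ≤ c := Nat.lt_succ_iff.1 (mem_range.1 hi)
        rw [show b + 1 + i - (c + 1) = b + i - c by omega, show c + 1 - i = c - i + 1 by omega,
          qBinom_succ_succ]
        rcases Nat.lt_or_ge b (c - i + 1) with hb | hb
        · rw [qBinom_eq_zero_of_lt hb]
          ring
        · obtain ⟨t, ht⟩ : ∃ t, b + i - c = t + 1 := ⟨b + i - c - 1, by omega⟩
          rw [ht, show b + i - (c + 1) = t by omega, show c - i + 1 = c + 1 - i by omega]
          have hpow :
              (X : ℤ[X]) ^ (i * (t + 1)) * X ^ (c + 1 - i) = X ^ (c + 1) * X ^ (i * t) := by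
            rw [← pow_add, ← pow_add, mul_add, mul_one]
            congr 1
            omega
          linear_combination qBinom a i * qBinom b (c + 1 - i) * hpow
      rw [← add_assoc, qBinom_succ_succ, ih, ih, sum_range_succ _ (c + 1),
        sum_range_succ _ (c + 1), sum_congr rfl hterm, sum_add_distrib, mul_add, mul_sum]
      simp only [Nat.sub_self, qBinom_zero_right, show b + (c + 1) - (c + 1) = b by omega,
        show b + 1 + (c + 1) - (c + 1) = b + 1 by omega]
      ring

lemma qBinom_two_mul_eq_sum (m p : ℕ) :
    qBinom (2 * (m + p)) p =
      ∑ s ∈ range (p + 1), X ^ (s * (m + s)) * (qBinom (m + p) s * qBinom (m + p) (p - s)) := by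
  rw [two_mul, qBinom_add_eq_sum]
  refine sum_congr rfl fun s hs => ?_
  rw [show m + p + s - p = m + s by omega]

lemma qBinom_sub_eq_sum (m : ℕ) {s p : ℕ} (hs : s ≤ p) :
    qBinom (m + p) (p - s) = ∑ i ∈ range (min s (p - s) + 1),
      X ^ (i * (m + i)) * (qBinom s i * qBinom (m + p - s) (p - s - i)) := by
  have h := qBinom_add_eq_sum s (m + p - s) (p - s)
  rw [Nat.add_sub_cancel' (by omega)] at h
  rw [h]
  refine (sum_subset (fun i => by simp only [mem_range]; omega) fun i hi hi' => ?_).symm.trans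
    (sum_congr rfl fun i hi => ?_)
  · simp only [mem_range] at hi hi'
    rw [qBinom_eq_zero_of_lt (by omega : s < i), zero_mul, mul_zero]
  · rw [show m + p - s + i - (p - s) = m + i by have := mem_range.1 hi; omega]

def nonnegCoeffs : Subsemiring ℤ[X] where
  carrier := {p | ∀ i, 0 ≤ p.coeff i}
  mul_mem' {p q} hp hq i := by
    rw [coeff_mul]
    exact sum_nonneg fun x _ => mul_nonneg (hp _) (hq _)
  one_mem' i := by
    rw [coeff_one]
    positivity
  add_mem' {p q} hp hq i := by
    rw [coeff_add]
    exact add_nonneg (hp i) (hq i)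
  zero_mem' i := le_of_eq (coeff_zero i).symm

lemma X_mem_nonnegCoeffs : (X : ℤ[X]) ∈ nonnegCoeffs := fun i => by
  rw [coeff_X]
  positivity

lemma qBinom_mem_nonnegCoeffs (n k : ℕ) : qBinom n k ∈ nonnegCoeffs := by
  induction n generalizing k with
  | zero => cases k with
    | zero => exact one_mem _
    | succ k => exact zero_mem _
  | succ n ih => cases k with
    | zero => exact one_mem _
    | succ k => exact add_mem (ih k) (mul_mem (pow_mem X_mem_nonnegCoeffs _) (ih (k + 1)))

def IsQSuperCatalan (n m : ℕ) (P : ℤ[X]) : Prop :=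
  qFactorial (2 * n) * qFactorial (2 * m) = P * (qFactorial n * qFactorial (n + m) * qFactorial m)

lemma IsQSuperCatalan.symm {n m : ℕ} {P : ℤ[X]} (h : IsQSuperCatalan n m P) :
    IsQSuperCatalan m n P := by
  unfold IsQSuperCatalan at *
  rw [add_comm m n]
  linear_combination h

lemma isQSuperCatalan_zero_left (m : ℕ) : IsQSuperCatalan 0 m (qBinom (2 * m) m) := by
  simp [IsQSuperCatalan, qFactorial_eq_qBinom_mul (two_mul m).symm, mul_assoc]

lemma IsQSuperCatalan.qBinom_mul_qFactorial_eq {i m k l : ℕ} {Q : ℤ[X]}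
    (hQ : IsQSuperCatalan i m Q) :
    qBinom (m + 2 * i + k + l) (i + k) * qBinom (i + k) i * qBinom (m + i + l) l *
        (qFactorial (2 * i + k + l) * qFactorial (2 * m)) =
      qBinom (2 * i + k + l) (2 * i) * qBinom (k + l) k * Q *
        (qFactorial (m + 2 * i + k + l) * qFactorial m) := by
  rw [IsQSuperCatalan, add_comm i m] at hQ
  rw [qFactorial_eq_qBinom_mul (n := m + 2 * i + k + l) (a := i + k) (b := m + i + l) (by ring),
    qFactorial_eq_qBinom_mul (n := i + k) (a := i) (b := k) rfl,
    qFactorial_eq_qBinom_mul (n := m + i + l) (a := l) (b := m + i) (by ring),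
    qFactorial_eq_qBinom_mul (n := 2 * i + k + l) (a := 2 * i) (b := k + l) (by ring),
    qFactorial_eq_qBinom_mul (n := k + l) (a := k) (b := l) rfl]
  linear_combination qBinom (m + 2 * i + k + l) (i + k) * qBinom (i + k) i *
    qBinom (m + i + l) l * qBinom (2 * i + k + l) (2 * i) * qBinom (k + l) k *
    qFactorial k * qFactorial l * hQ

noncomputable def qSuperCatalanExpansion (m p : ℕ) (Q : ℕ → ℤ[X]) : ℤ[X] :=
  ∑ s ∈ range (p + 1), ∑ i ∈ range (min s (p - s) + 1),
    X ^ (s * (m + s) + i * (m + i)) * (qBinom p (2 * i) * qBinom (p - 2 * i) (s - i) * Q i)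

lemma qSuperCatalanExpansion_mem_nonnegCoeffs (m p : ℕ) {Q : ℕ → ℤ[X]}
    (hQ : ∀ i, Q i ∈ nonnegCoeffs) : qSuperCatalanExpansion m p Q ∈ nonnegCoeffs :=
  sum_mem fun _ _ => sum_mem fun i _ => mul_mem (pow_mem X_mem_nonnegCoeffs _) <|
    mul_mem (mul_mem (qBinom_mem_nonnegCoeffs _ _) (qBinom_mem_nonnegCoeffs _ _)) (hQ i)

lemma isQSuperCatalan_qSuperCatalanExpansion {m p : ℕ} {Q : ℕ → ℤ[X]}
    (hQ : ∀ i, 2 * i ≤ p → IsQSuperCatalan i m (Q i)) :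
    IsQSuperCatalan (m + p) m (qSuperCatalanExpansion m p Q) := by
  rw [IsQSuperCatalan, qFactorial_eq_qBinom_mul (a := p) (b := m + p + m) (by ring),
    qBinom_two_mul_eq_sum, qSuperCatalanExpansion]
  simp only [sum_mul]
  refine sum_congr rfl fun s hs => ?_
  have hs : s ≤ p := Nat.lt_succ_iff.1 (mem_range.1 hs)
  rw [qBinom_sub_eq_sum m hs]
  simp only [mul_sum, sum_mul]
  refine sum_congr rfl fun i hi => ?_
  have hi : i ≤ s ∧ i ≤ p - s := by simpa [Nat.lt_succ_iff] using mem_range.1 hi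
  obtain ⟨k, rfl⟩ := Nat.exists_eq_add_of_le hi.1
  obtain ⟨l, rfl⟩ : ∃ l, p = 2 * i + k + l := ⟨p - (2 * i + k), by omega⟩
  have hterm := (hQ i (by omega)).qBinom_mul_qFactorial_eq (k := k) (l := l)
  rw [show m + (2 * i + k + l) - (i + k) = m + i + l by omega,
    show 2 * i + k + l - (i + k) - i = l by omega, show 2 * i + k + l - 2 * i = k + l by omega,
    Nat.add_sub_cancel_left,
    show m + (2 * i + k + l) = m + 2 * i + k + l by ring, pow_add]
  linear_combination X ^ ((i + k) * (m + (i + k))) * X ^ (i * (m + i)) *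
    qFactorial (m + 2 * i + k + l + m) * hterm

theorem q_super_catalan_positive (n m : ℕ) :
    ∃ P : Polynomial ℤ, (∀ i, 0 ≤ P.coeff i) ∧
      qFactorial (2 * n) * qFactorial (2 * m) =
        P * (qFactorial n * qFactorial (n + m) * qFactorial m) := by
  suffices h : ∀ N n m, n + m = N → ∃ P ∈ nonnegCoeffs, IsQSuperCatalan n m P from
    h _ n m rfl
  intro N
  induction N using Nat.strong_induction_on with
  | _ N ih =>
  intro n m hN
  wlog hmn : m ≤ n generalizing n m
  · obtain ⟨P, hP, h⟩ := this m n (by omega) (by omega)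
    exact ⟨P, hP, h.symm⟩
  obtain ⟨p, rfl⟩ := Nat.exists_eq_add_of_le hmn
  have hQ (i : ℕ) : ∃ Q ∈ nonnegCoeffs, 2 * i ≤ p → IsQSuperCatalan i m Q := by
    -- `A(0, m)` is supplied directly: for `p = 0` it is not a smaller instance.
    rcases i.eq_zero_or_pos with rfl | hi
    · exact ⟨_, qBinom_mem_nonnegCoeffs _ _, fun _ => isQSuperCatalan_zero_left m⟩
    by_cases hip : 2 * i ≤ p
    · obtain ⟨Q, hQ, h⟩ := ih (i + m) (by omega) i m rfl
      exact ⟨Q, hQ, fun _ => h⟩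
    · exact ⟨0, zero_mem _, (absurd · hip)⟩
  choose Q hQ hQeq using hQ
  exact ⟨_, qSuperCatalanExpansion_mem_nonnegCoeffs m p hQ,
    isQSuperCatalan_qSuperCatalanExpansion hQeq⟩
end
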